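/- With c and κ as before, for each i ∈ {n-k+2,…,n}, the affine function g_i(x) = -x₁ + x_i + x_{n+1} on ℝ^{n+1} is nonnegative on all lifted vertices (v, κ(v)) of Δ(k,n), and vanishes exactly on (c,0) together with the lifted vertices v with v_i = 0. -/
import Mathlib


/-- The vertex set of the hypersimplex Δ(k,n): 0/1-vectors with exactly k ones. -/
def hypersimplexVerts (k n : ℕ) : Set (Fin n → ℝ) :=
  {x | (∀ i, x i = 0 ∨ x i = 1) ∧ ∑ i, x i = k}

/-- The center c = e₁ + e_{n-k+2} + ⋯ + e_n: a leading one, n-k zeros, k-1 trailing ones. -/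
def center (k n : ℕ) : Fin n → ℝ := fun l =>
  if l.val = 0 ∨ n - k + 1 ≤ l.val then 1 else 0

open Classical in
/-- The height function κ: 1 on every vertex with first coordinate 1 except c, else 0. -/
noncomputable def kap (k n : ℕ) (hn : 0 < n) (v : Fin n → ℝ) : ℝ :=
  if v ⟨0, hn⟩ = 1 ∧ v ≠ center k n then 1 else 0

/-- The lift of a vertex v of Δ(k,n) to (v, κ(v)) ∈ ℝ^{n+1}. -/
noncomputable def liftVert (k n : ℕ) (hn : 0 < n) (v : Fin n → ℝ) : Fin (n + 1) → ℝ :=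
  Fin.snoc v (kap k n hn v)

/-- The affine function g_i(x) = -x₁ + x_i + x_{n+1} on ℝ^{n+1}. -/
def gAff (n : ℕ) (i : Fin n) (x : Fin (n + 1) → ℝ) : ℝ :=
  -x 0 + x i.castSucc + x (Fin.last n)

/-- For 2 ≤ k ≤ n-2 and i ∈ {n-k+2,…,n}, the affine function
g_i(x) = -x₁ + x_i + x_{n+1} is nonnegative on all lifted vertices (v, κ(v)) of
Δ(k,n), and vanishes exactly on the lifted center (c,0) together with the lifted
vertices v with v_i = 0. -/
theorem gAff_nonneg_and_zero_iff (n k : ℕ) (hk : 2 ≤ k) (hkn : k ≤ n - 2)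
    (i : Fin n) (hi : n - k + 1 ≤ i.val) :
    ∀ v ∈ hypersimplexVerts k n,
      0 ≤ gAff n i (liftVert k n (by omega) v) ∧
      (gAff n i (liftVert k n (by omega) v) = 0 ↔ v = center k n ∨ v i = 0) := by

  have hn : 0 < n := by omega
  intro v hv
  obtain ⟨h01, hsum⟩ := hv
  have hci : center k n i = 1 := by
    simp [center, hi]
  have hc0 : center k n ⟨0, hn⟩ = 1 := by
    simp [center]
  have hg : gAff n i (liftVert k n (by omega) v) = -v ⟨0, hn⟩ + v i + kap k n hn v := by
    unfold gAff liftVert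
    have h0 : (0 : Fin (n + 1)) = Fin.castSucc ⟨0, hn⟩ := by
      ext; simp
    rw [Fin.snoc_last, h0, Fin.snoc_castSucc, Fin.snoc_castSucc]
  rw [hg]
  unfold kap
  by_cases hcase : v ⟨0, hn⟩ = 1 ∧ v ≠ center k n
  · rw [if_pos hcase, hcase.1]
    constructor
    · rcases h01 i with h | h <;> rw [h] <;> norm_num
    · constructor
      · intro h
        right; linarith
      · rintro (h | h)
        · exact absurd h hcase.2
        · rw [h]; ring
  · rw [if_neg hcase]
    by_cases hv0 : v ⟨0, hn⟩ = 1
    · push_neg at hcase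
      have hvc' : v = center k n := hcase hv0
      subst hvc'
      rw [hc0, hci]
      refine ⟨by norm_num, ?_⟩
      constructor
      · intro _; left; rfl
      · intro _; ring
    · have hv0' : v ⟨0, hn⟩ = 0 := (h01 ⟨0, hn⟩).resolve_right hv0
      rw [hv0']
      constructor
      · rcases h01 i with h | h <;> rw [h] <;> norm_num
      · constructor
        · intro h; right; linarith
        · rintro (h | h)
          · exfalso; rw [h, hc0] at hv0'; norm_num at hv0'
          · rw [h]; ring
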